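/- Let A ∈ ℝ^{n×n} satisfy x^T Q A x ≤ 0 for all x ∈ ℝ^n, where Q ∈ ℝ^{n×n} is symmetric positive definite. Let V ∈ ℝ^{n×r} have full column rank and define the Galerkin-projected matrix A_r = (V^T Q V)^{-1} V^T Q A V. Then the reduced system ẋ_r = A_r x_r is Lyapunov stable with Lyapunov function x_r ↦ x_r^T (V^T Q V) x_r, i.e. x_r^T (V^T Q V) A_r x_r ≤ 0 for all x_r ∈ ℝ^r. -/

import Mathlib

/-!
The Galerkin matrix satisfies `(VᵀQV) A_r = Vᵀ (Q A) V`, so the reduced energy rate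
`x_rᵀ (VᵀQV) A_r x_r` is the full energy rate `xᵀ Q A x` evaluated at the lifted state `x = V x_r`,
hence nonpositive. Full column rank of `V` together with `Q ≻ 0` makes `VᵀQV` positive definite,
in particular invertible, which is what licenses cancelling `(VᵀQV)⁻¹`.
-/

namespace Matrix

theorem mulVec_injective_of_rank_eq_card_width {K m n : Type*} [Field K] [Fintype m] [Fintype n]
    {V : Matrix m n K} (hV : V.rank = Fintype.card n) : Function.Injective V.mulVec := by
  have h := LinearMap.finrank_range_add_finrank_ker V.mulVecLin
  rw [← rank, hV, Module.finrank_fintype_fun_eq_card, add_eq_left, Submodule.finrank_eq_zero,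
    LinearMap.ker_eq_bot] at h
  exact h

theorem dotProduct_mulVec_transpose_mul_mul {R m n : Type*} [CommSemiring R] [Fintype m]
    [Fintype n] (V : Matrix m n R) (B : Matrix m m R) (x : n → R) :
    x ⬝ᵥ ((Vᵀ * B * V) *ᵥ x) = (V *ᵥ x) ⬝ᵥ (B *ᵥ (V *ᵥ x)) := by
  rw [← mulVec_mulVec, ← mulVec_mulVec, dotProduct_mulVec, vecMul_transpose]

theorem PosDef.transpose_mul_mul_same {m n : Type*} [Fintype m] [Fintype n]
    {Q : Matrix m m ℝ} (hQ : Q.PosDef) {V : Matrix m n ℝ} (hV : Function.Injective V.mulVec) :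
    (Vᵀ * Q * V).PosDef := by
  simpa only [conjTranspose_eq_transpose_of_trivial] using hQ.conjTranspose_mul_mul_same hV

theorem dotProduct_galerkin_mulVec {R m n : Type*} [CommRing R] [Fintype m] [Fintype n]
    [DecidableEq n] (V : Matrix m n R) (Q A : Matrix m m R) (hdet : IsUnit (Vᵀ * Q * V).det)
    (x : n → R) :
    x ⬝ᵥ ((Vᵀ * Q * V) *ᵥ (((Vᵀ * Q * V)⁻¹ * (Vᵀ * Q * A * V)) *ᵥ x)) =
      (V *ᵥ x) ⬝ᵥ (Q *ᵥ (A *ᵥ (V *ᵥ x))) := by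
  rw [mulVec_mulVec, mul_nonsing_inv_cancel_left _ _ hdet, Matrix.mul_assoc Vᵀ Q A,
    dotProduct_mulVec_transpose_mul_mul, ← mulVec_mulVec]

end Matrix

open Matrix

theorem stmt_8 (n r : ℕ) (A : Matrix (Fin n) (Fin n) ℝ)
    (Q : Matrix (Fin n) (Fin n) ℝ) (hQ : Q.PosDef)
    (hstab : ∀ x : Fin n → ℝ, x ⬝ᵥ (Q *ᵥ (A *ᵥ x)) ≤ 0)
    (V : Matrix (Fin n) (Fin r) ℝ) (hV : V.rank = r)
    (A_r : Matrix (Fin r) (Fin r) ℝ)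
    (hAr : A_r = (Vᵀ * Q * V)⁻¹ * (Vᵀ * Q * A * V)) :
    ∀ x_r : Fin r → ℝ, x_r ⬝ᵥ ((Vᵀ * Q * V) *ᵥ (A_r *ᵥ x_r)) ≤ 0 := by
  intro x_r
  have hVinj : Function.Injective V.mulVec :=
    mulVec_injective_of_rank_eq_card_width (hV.trans (Fintype.card_fin r).symm)
  have hdet : IsUnit (Vᵀ * Q * V).det :=
    (isUnit_iff_isUnit_det _).mp (hQ.transpose_mul_mul_same hVinj).isUnit
  rw [hAr, dotProduct_galerkin_mulVec V Q A hdet]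
  exact hstab (V *ᵥ x_r)
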